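/- Let A, B be real symmetric positive semidefinite N×N matrices. The squared 2-Wasserstein distance between the centered Gaussians N(0, A²) and N(0, B²), given by Tr(A²) + Tr(B²) − 2 Tr(√(A B² A)), is nonnegative. -/

import Mathlib

/-! For a Hermitian square root `S` of `A B² A` and a positive definite `Y`, expanding
`0 ≤ Tr((S - Y) Y⁻¹ (S - Y))` gives `2 Tr S ≤ Tr(Y⁻¹ S²) + Tr Y`. Take `Y = A² + ε`: it commutes
with `A`, so `Tr(Y⁻¹ A B² A) = Tr((1 - ε Y⁻¹) B²) ≤ Tr B²`, while `Tr Y = Tr A² + ε N`.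
Letting `ε → 0` gives `2 Tr S ≤ Tr A² + Tr B²`. -/

open Matrix

open scoped ComplexOrder in
/-- The square root of a positive semidefinite matrix, as `Matrix.PosSemidef.sqrt` was defined
in Mathlib (December 2024); removed from current Mathlib. -/
noncomputable def Matrix.PosSemidef.sqrt {n : Type*} [Fintype n] [DecidableEq n] {𝕜 : Type*}
    [RCLike 𝕜] {A : Matrix n n 𝕜} (hA : A.PosSemidef) : Matrix n n 𝕜 :=
  hA.1.eigenvectorUnitary.1 * diagonal ((↑) ∘ (Real.sqrt ∘ hA.1.eigenvalues)) *
    (star hA.1.eigenvectorUnitary : Matrix n n 𝕜)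

namespace Matrix.PosSemidef

open scoped ComplexOrder

variable {n : Type*} [Fintype n] [DecidableEq n] {𝕜 : Type*} [RCLike 𝕜] {A : Matrix n n 𝕜}

lemma posSemidef_sqrt (hA : A.PosSemidef) : hA.sqrt.PosSemidef := by
  have hD : (diagonal ((↑) ∘ (Real.sqrt ∘ hA.1.eigenvalues)) : Matrix n n 𝕜).PosSemidef :=
    PosSemidef.diagonal fun i => by simp [Real.sqrt_nonneg]
  have := hD.mul_mul_conjTranspose_same (hA.1.eigenvectorUnitary : Matrix n n 𝕜)
  rwa [← star_eq_conjTranspose] at this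

lemma sqrt_mul_self (hA : A.PosSemidef) : hA.sqrt * hA.sqrt = A := by
  set U : Matrix n n 𝕜 := (hA.1.eigenvectorUnitary : Matrix n n 𝕜)
  set D : Matrix n n 𝕜 := diagonal ((↑) ∘ (Real.sqrt ∘ hA.1.eigenvalues))
  have hU : star U * U = 1 := Unitary.coe_star_mul_self _
  have hDD : D * D = diagonal (RCLike.ofReal ∘ hA.1.eigenvalues) := by
    simp only [D, diagonal_mul_diagonal, Function.comp_apply, ← RCLike.ofReal_mul,
      Real.mul_self_sqrt (hA.eigenvalues_nonneg _)]
    rfl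
  calc hA.sqrt * hA.sqrt = U * D * (star U * U) * D * star U := by
        simp only [sqrt, U, D, Matrix.mul_assoc]
    _ = A := by
        rw [hU, Matrix.mul_one, Matrix.mul_assoc U, hDD]
        conv_rhs => rw [hA.1.spectral_theorem, Unitary.conjStarAlgAut_apply]

end Matrix.PosSemidef

namespace Matrix

variable {n : Type*} [Fintype n] [DecidableEq n]

lemma two_mul_trace_le_trace_inv_mul_sq_add_trace {S Y : Matrix n n ℝ} (hS : S.IsHermitian)
    (hY : Y.PosDef) : 2 * S.trace ≤ (Y⁻¹ * (S * S)).trace + Y.trace := by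
  have hYu : IsUnit Y.det := (isUnit_iff_isUnit_det Y).1 hY.isUnit
  have hsq : 0 ≤ ((S - Y)ᴴ * Y⁻¹ * (S - Y)).trace :=
    (hY.inv.posSemidef.conjTranspose_mul_mul_same (S - Y)).trace_nonneg
  have hexpand : (S - Y)ᴴ * Y⁻¹ * (S - Y) = S * Y⁻¹ * S - S - S + Y := by
    rw [conjTranspose_sub, hS.eq, hY.isHermitian.eq]
    simp only [Matrix.sub_mul, Matrix.mul_sub, Matrix.mul_assoc, mul_nonsing_inv _ hYu,
      nonsing_inv_mul _ hYu, Matrix.mul_one, Matrix.one_mul]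
    abel
  rw [hexpand, trace_add, trace_sub, trace_sub, Matrix.mul_assoc, trace_mul_comm S,
    Matrix.mul_assoc] at hsq
  linarith

lemma IsHermitian.posDef_mul_self_add_smul_one {A : Matrix n n ℝ} (hA : A.IsHermitian) {ε : ℝ}
    (hε : 0 < ε) : (A * A + ε • 1).PosDef := by
  have hAA : (A * A).PosSemidef := by
    simpa only [hA.eq] using posSemidef_conjTranspose_mul_self A
  exact PosDef.posSemidef_add hAA (PosDef.one.smul hε)

lemma trace_inv_mul_self_add_smul_one_mul_le {A B : Matrix n n ℝ} (hA : A.IsHermitian)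
    (hB : B.IsHermitian) {ε : ℝ} (hε : 0 < ε) :
    ((A * A + ε • 1)⁻¹ * (A * (B * B) * A)).trace ≤ (B * B).trace := by
  set X := A * A + ε • (1 : Matrix n n ℝ)
  have hX : X.PosDef := hA.posDef_mul_self_add_smul_one hε
  have hXu : IsUnit X.det := (isUnit_iff_isUnit_det X).1 hX.isUnit
  have hAX : A * X⁻¹ = X⁻¹ * A := by
    have hXA : X * A = A * X := by
      simp only [X, Matrix.add_mul, Matrix.mul_add, Matrix.mul_assoc, Matrix.smul_mul,
        Matrix.mul_smul, Matrix.one_mul, Matrix.mul_one]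
    calc A * X⁻¹ = X⁻¹ * (X * A) * X⁻¹ := by
          rw [← Matrix.mul_assoc, nonsing_inv_mul _ hXu, Matrix.one_mul]
      _ = X⁻¹ * A := by
          rw [hXA, Matrix.mul_assoc, Matrix.mul_assoc, mul_nonsing_inv _ hXu, Matrix.mul_one]
  have hXAA : X⁻¹ * (A * A) = 1 - ε • X⁻¹ := by
    rw [show A * A = X - ε • 1 by simp [X], Matrix.mul_sub, nonsing_inv_mul _ hXu,
      Matrix.mul_smul, Matrix.mul_one]
  have hBXB : 0 ≤ (X⁻¹ * (B * B)).trace := by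
    rw [← Matrix.mul_assoc, trace_mul_comm, ← Matrix.mul_assoc]
    simpa only [hB.eq] using (hX.inv.posSemidef.conjTranspose_mul_mul_same B).trace_nonneg
  calc (X⁻¹ * (A * (B * B) * A)).trace = (X⁻¹ * (A * A) * (B * B)).trace := by
        rw [← Matrix.mul_assoc, trace_mul_comm, ← Matrix.mul_assoc, hAX]
        simp only [Matrix.mul_assoc]
    _ = (B * B).trace - ε * (X⁻¹ * (B * B)).trace := by
        rw [hXAA, Matrix.sub_mul, Matrix.one_mul, trace_sub, smul_mul, trace_smul, smul_eq_mul]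
    _ ≤ (B * B).trace := by nlinarith

open Filter Topology in
theorem two_mul_trace_le_of_mul_self_eq {A B S : Matrix n n ℝ} (hA : A.IsHermitian)
    (hB : B.IsHermitian) (hS : S.IsHermitian) (hSS : S * S = A * (B * B) * A) :
    2 * S.trace ≤ (A * A).trace + (B * B).trace := by
  set a := (A * A).trace + (B * B).trace
  have hbound : ∀ ε > 0, 2 * S.trace ≤ a + ε * Fintype.card n := fun ε hε => by
    have hX := hA.posDef_mul_self_add_smul_one hε
    have hTrX : (A * A + ε • 1).trace = (A * A).trace + ε * Fintype.card n := by
      rw [trace_add, trace_smul, trace_one, smul_eq_mul]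
    have := two_mul_trace_le_trace_inv_mul_sq_add_trace hS hX
    rw [hSS, hTrX] at this
    linarith [trace_inv_mul_self_add_smul_one_mul_le hA hB hε]
  have hlim : Tendsto (fun ε : ℝ => a + ε * Fintype.card n) (𝓝[>] 0) (𝓝 a) := by
    have hcont : Continuous fun ε : ℝ => a + ε * Fintype.card n := by fun_prop
    simpa using (hcont.tendsto 0).mono_left nhdsWithin_le_nhds
  exact ge_of_tendsto hlim (eventually_nhdsWithin_of_forall hbound)

end Matrix

/-- For symmetric positive semidefinite `A`, `B`, the squared 2-Wasserstein distance between
the centered Gaussians `N(0, A²)` and `N(0, B²)`, namely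
`Tr(A²) + Tr(B²) − 2 Tr(√(A B² A))`, is nonnegative. -/
theorem stmt_8 {N : ℕ} (A B : Matrix (Fin N) (Fin N) ℝ)
    (hA : A.PosSemidef) (hB : B.PosSemidef)
    (hM : (A * (B * B) * A).PosSemidef) :
    0 ≤ (A * A).trace + (B * B).trace - 2 * hM.sqrt.trace := by
  have := two_mul_trace_le_of_mul_self_eq hA.isHermitian hB.isHermitian
    hM.posSemidef_sqrt.isHermitian hM.sqrt_mul_self
  linarith
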